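/- arXiv:1903.03021 — 2 statements merged into one kernel-verified Lean document; each statement's English description precedes it below -/
import Mathlib

section
/- Identifying ℍ × ℍ with an open subset of ℝ⁴ via coordinates (x₁,y₁,x₂,y₂), the vector field X(x₁,y₁,x₂,y₂) = -ln(λ)(λ^{-t} y₂ e₂ + λ^t y₁ e₄) at a point f_z(t,x,y) is orthogonal (in the Euclidean inner product on ℝ⁴) to the image of the differential of the orbit map f_z at (t,x,y). -/
/-!
Only the `y`-coordinates of `f_z` meet `X`, so with `s` the time of the base point,
`⟪X, f_z(t, x, y)⟫ = -ln λ · y₁ y₂ (λ^(t-s) + λ^(s-t))`, a function of `t` alone that is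
stationary at `t = s`. Hence the differential of `q ↦ ⟪X, f_z q⟫`, which is `⟪X, df_z(·)⟫`,
vanishes at the base point.
-/

open Real

/-- The orbit map of the Sol action on ℍ×ℍ ⊂ ℝ⁴, in real coordinates
`(x₁, y₁, x₂, y₂)`, where `z_k = x_k + i y_k`. -/
noncomputable def orbitMapR4 (l a b c d x₁ y₁ x₂ y₂ : ℝ) (p : ℝ × ℝ × ℝ) :
    EuclideanSpace ℝ (Fin 4) :=
  WithLp.toLp 2 ![l ^ p.1 * x₁ + (a * p.2.1 + b * p.2.2), l ^ p.1 * y₁,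
    l ^ (-p.1) * x₂ + (c * p.2.1 + d * p.2.2), l ^ (-p.1) * y₂]

/-- The vector field `X = -ln(λ)(λ^{-t} y₂ e₂ + λ^t y₁ e₄)`. -/
noncomputable def normalField (l y₁ y₂ t : ℝ) : EuclideanSpace ℝ (Fin 4) :=
  WithLp.toLp 2 ![0, -Real.log l * (l ^ (-t) * y₂), 0, -Real.log l * (l ^ t * y₁)]

theorem inner_fderiv_apply_eq_zero {E F : Type*} [NormedAddCommGroup E] [NormedSpace ℝ E]
    [NormedAddCommGroup F] [InnerProductSpace ℝ F] {f : E → F} {x : E} {w : F}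
    (h : HasFDerivAt (fun y => inner ℝ w (f y)) (0 : E →L[ℝ] ℝ) x) (v : E) :
    inner ℝ w (fderiv ℝ f x v) = 0 := by
  by_cases hf : DifferentiableAt ℝ f x
  · have h' := (innerSL ℝ w).hasFDerivAt.comp x hf.hasFDerivAt
    simpa using congrArg (· v) (h'.unique h)
  · simp [fderiv_zero_of_not_differentiableAt hf]

theorem inner_normalField_orbitMapR4 (l a b c d x₁ y₁ x₂ y₂ s : ℝ) (q : ℝ × ℝ × ℝ) :
    inner ℝ (normalField l y₁ y₂ s) (orbitMapR4 l a b c d x₁ y₁ x₂ y₂ q) =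
      -Real.log l * y₁ * y₂ * (l ^ (-s) * l ^ q.1 + l ^ s * l ^ (-q.1)) := by
  simp only [normalField, orbitMapR4, PiLp.inner_apply, RCLike.inner_apply, conj_trivial,
    Fin.sum_univ_four, Matrix.cons_val_zero, Matrix.cons_val_one, Matrix.cons_val, mul_zero,
    zero_add, add_zero]
  ring

theorem hasDerivAt_rpow_add_rpow_neg {l : ℝ} (hl : 0 < l) (s : ℝ) :
    HasDerivAt (fun t => l ^ (-s) * l ^ t + l ^ s * l ^ (-t)) 0 s := by
  have hpos : HasDerivAt (fun t => l ^ t) (l ^ s * Real.log l) s :=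
    (hasStrictDerivAt_const_rpow hl s).hasDerivAt
  have hneg : HasDerivAt (fun t => l ^ (-t)) (l ^ (-s) * Real.log l * -1) s :=
    (hasStrictDerivAt_const_rpow hl (-s)).hasDerivAt.comp s (hasDerivAt_neg s)
  exact ((hpos.const_mul (l ^ (-s))).add (hneg.const_mul (l ^ s))).congr_deriv (by ring)

theorem normalField_orthogonal_general (l a b c d x₁ y₁ x₂ y₂ : ℝ) (hl : 1 < l)
    (p : ℝ × ℝ × ℝ) :
    ∀ v ∈ Set.range (fderiv ℝ (orbitMapR4 l a b c d x₁ y₁ x₂ y₂) p),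
      inner ℝ (normalField l y₁ y₂ p.1) v = (0 : ℝ) := by
  rintro _ ⟨v, rfl⟩
  apply inner_fderiv_apply_eq_zero
  simp only [inner_normalField_orbitMapR4]
  have h := ((hasDerivAt_rpow_add_rpow_neg (zero_lt_one.trans hl) p.1).const_mul
    (-Real.log l * y₁ * y₂)).comp_hasFDerivAt p (hasFDerivAt_fst (𝕜 := ℝ) (p := p))
  simpa [Function.comp_def] using h

/-- The vector field `X(f_z(t,x,y)) = -ln(λ)(λ^{-t} y₂ e₂ + λ^t y₁ e₄)` is orthogonal,
in the Euclidean inner product on ℝ⁴, to the image of the differential of the orbit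
map `f_z` at `(t,x,y)`. -/
theorem normalField_orthogonal (l a b c d x₁ y₁ x₂ y₂ : ℝ) (hl : 1 < l)
    (hM : a * d - b * c ≠ 0) (hy₁ : 0 < y₁) (hy₂ : 0 < y₂) (p : ℝ × ℝ × ℝ) :
    ∀ v ∈ Set.range (fderiv ℝ (orbitMapR4 l a b c d x₁ y₁ x₂ y₂) p),
      inner ℝ (normalField l y₁ y₂ p.1) v = (0 : ℝ) :=
  normalField_orthogonal_general l a b c d x₁ y₁ x₂ y₂ hl p
end

section
/- The map Ψ : Heis × ℝ → ℂ × ℍ defined by Ψ((a,b,c), q) = (a q i + c, b + q i) for q ∈ ℝ₊ (equivalently, Ψ(γ, q) = γ·(0, qi)) is a diffeomorphism from Heis × ℝ₊ onto ℂ × ℍ, and it intertwines the left action of Heis on the first factor with the action of Heis on ℂ × ℍ: Ψ(γ'γ, q) = γ'·Ψ(γ, q). -/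
open Complex

/-- The Heisenberg product on ℝ³. -/
def heisMul (p q : ℝ × ℝ × ℝ) : ℝ × ℝ × ℝ :=
  (p.1 + q.1, p.2.1 + q.2.1, p.2.2 + q.2.2 + p.1 * q.2.1)

/-- The Heisenberg action `(a,b,c)·(z,w) = (z + a w + c, w + b)` on ℂ × ℍ. -/
def heisAct (g : ℝ × ℝ × ℝ) (p : ℂ × ℂ) : ℂ × ℂ :=
  (p.1 + (g.1 : ℂ) * p.2 + (g.2.2 : ℂ), p.2 + (g.2.1 : ℂ))

/-- `Ψ((a,b,c), q) = γ·(0, qi) = (a q i + c, b + q i)`. -/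
def heisPsi (p : (ℝ × ℝ × ℝ) × ℝ) : ℂ × ℂ :=
  heisAct p.1 (0, (p.2 : ℂ) * I)

@[fun_prop] lemma heis_cd_ofReal : ContDiff ℝ (⊤ : ℕ∞) (Complex.ofReal) := ofRealCLM.contDiff
@[fun_prop] lemma heis_cd_re : ContDiff ℝ (⊤ : ℕ∞) (Complex.re) := reCLM.contDiff
@[fun_prop] lemma heis_cd_im : ContDiff ℝ (⊤ : ℕ∞) (Complex.im) := imCLM.contDiff

/-- The inverse map. -/
noncomputable def heisPhi (p : ℂ × ℂ) : (ℝ × ℝ × ℝ) × ℝ :=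
  ((p.1.im / p.2.im, p.2.re, p.1.re), p.2.im)

lemma heisPsi_contDiff : ContDiff ℝ (⊤ : ℕ∞) heisPsi := by
  unfold heisPsi heisAct; fun_prop

lemma heisPhi_contDiffAt {z : ℂ × ℂ} (h : z.2.im ≠ 0) : ContDiffAt ℝ (⊤ : ℕ∞) heisPhi z := by
  unfold heisPhi; fun_prop (disch := assumption)

lemma heisPsi_snd_im (p : (ℝ × ℝ × ℝ) × ℝ) : (heisPsi p).2.im = p.2 := by
  simp [heisPsi, heisAct]

lemma heisPhi_heisPsi (p : (ℝ × ℝ × ℝ) × ℝ) (h : p.2 ≠ 0) : heisPhi (heisPsi p) = p := by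
  obtain ⟨⟨a, b, c⟩, q⟩ := p
  simp only [heisPsi, heisAct, heisPhi]
  simp only [Prod.mk.injEq]
  refine ⟨⟨?_, by simp, by simp⟩, by simp⟩
  · simp only [zero_add, add_im, mul_im, ofReal_re, I_im, ofReal_im, I_re, mul_zero,
      add_zero, mul_one, zero_mul, mul_re]
    field_simp

lemma heisPsi_heisPhi (z : ℂ × ℂ) (h : z.2.im ≠ 0) : heisPsi (heisPhi z) = z := by
  obtain ⟨u, w⟩ := z
  simp only [heisPhi] at h ⊢
  simp only [heisPsi, heisAct, Prod.mk.injEq]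
  constructor
  · apply Complex.ext <;>
      simp only [add_re, add_im, mul_re, mul_im, ofReal_re, ofReal_im, I_re, I_im,
        zero_add, zero_re, zero_im, mul_zero, mul_one, zero_mul, sub_zero, add_zero] <;>
      field_simp
  · apply Complex.ext <;>
      simp [mul_re, mul_im]

/-- `Ψ(γ, q) = γ·(0, qi)` is a diffeomorphism from `Heis × ℝ₊` onto `ℂ × ℍ`: it is
smooth, injective on `{q > 0}`, maps it onto `ℂ × ℍ`, has bijective differential at
each of its points, and intertwines the left Heisenberg action on the first factor
with the Heisenberg action on ℂ × ℍ. -/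
theorem heisPsi_diffeomorphism :
    ContDiff ℝ (⊤ : ℕ∞) heisPsi ∧
    Set.InjOn heisPsi {p : (ℝ × ℝ × ℝ) × ℝ | 0 < p.2} ∧
    heisPsi '' {p : (ℝ × ℝ × ℝ) × ℝ | 0 < p.2} = {z : ℂ × ℂ | 0 < z.2.im} ∧
    (∀ p ∈ {p : (ℝ × ℝ × ℝ) × ℝ | 0 < p.2},
      Function.Bijective (fderiv ℝ heisPsi p)) ∧
    (∀ (γ' γ : ℝ × ℝ × ℝ) (q : ℝ),
      heisPsi (heisMul γ' γ, q) = heisAct γ' (heisPsi (γ, q))) := by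
  have hopen1 : IsOpen {p : (ℝ × ℝ × ℝ) × ℝ | 0 < p.2} :=
    isOpen_lt continuous_const continuous_snd
  have hopen2 : IsOpen {z : ℂ × ℂ | 0 < z.2.im} :=
    isOpen_lt continuous_const (Complex.continuous_im.comp continuous_snd)
  refine ⟨heisPsi_contDiff, ?_, ?_, ?_, ?_⟩
  · intro p hp p' hp' hpp
    have := congrArg heisPhi hpp
    rwa [heisPhi_heisPsi p (ne_of_gt hp), heisPhi_heisPsi p' (ne_of_gt hp')] at this
  · ext z
    constructor
    · rintro ⟨p, hp, rfl⟩
      simpa [heisPsi_snd_im] using hp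
    · intro hz
      exact ⟨heisPhi z, by simpa [heisPhi] using hz, heisPsi_heisPhi z (ne_of_gt hz)⟩
  · intro p hp
    have hp' : (0:ℝ) < p.2 := hp
    have hΨd : DifferentiableAt ℝ heisPsi p :=
      heisPsi_contDiff.differentiable (by simp) p
    have him : (heisPsi p).2.im = p.2 := heisPsi_snd_im p
    have hΦd : DifferentiableAt ℝ heisPhi (heisPsi p) :=
      (heisPhi_contDiffAt (by rw [him]; exact ne_of_gt hp')).differentiableAt (by simp)
    have heq1 : heisPhi ∘ heisPsi =ᶠ[nhds p] id :=
      Filter.eventuallyEq_of_mem (hopen1.mem_nhds hp)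
        (fun x hx => heisPhi_heisPsi x (ne_of_gt hx))
    have hmem2 : heisPsi p ∈ {z : ℂ × ℂ | 0 < z.2.im} := by
      simpa [Set.mem_setOf_eq, him] using hp'
    have heq2 : heisPsi ∘ heisPhi =ᶠ[nhds (heisPsi p)] id :=
      Filter.eventuallyEq_of_mem (hopen2.mem_nhds hmem2)
        (fun x hx => heisPsi_heisPhi x (ne_of_gt hx))
    have h1 : (fderiv ℝ heisPhi (heisPsi p)).comp (fderiv ℝ heisPsi p) =
        ContinuousLinearMap.id ℝ _ := by
      rw [← fderiv_comp p hΦd hΨd, heq1.fderiv_eq, fderiv_id]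
    have hΨd' : DifferentiableAt ℝ heisPsi (heisPhi (heisPsi p)) := by
      rw [heisPhi_heisPsi p (ne_of_gt hp')]; exact hΨd
    have h2 : (fderiv ℝ heisPsi p).comp (fderiv ℝ heisPhi (heisPsi p)) =
        ContinuousLinearMap.id ℝ _ := by
      have := fderiv_comp (heisPsi p) hΨd' hΦd
      rw [heisPhi_heisPsi p (ne_of_gt hp')] at this
      rw [← this, heq2.fderiv_eq, fderiv_id]
    constructor
    · exact Function.LeftInverse.injective (g := fderiv ℝ heisPhi (heisPsi p))
        (fun x => by rw [← ContinuousLinearMap.comp_apply, h1]; rfl)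
    · exact Function.RightInverse.surjective (g := fderiv ℝ heisPhi (heisPsi p))
        (fun x => by rw [← ContinuousLinearMap.comp_apply, h2]; rfl)
  · intro γ' γ q
    simp only [heisPsi, heisAct, heisMul, Prod.mk.injEq]
    constructor
    · push_cast; ring
    · push_cast; ring
end
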